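/- Let m, n ≥ 1. Let u₁, …, u_{m+1} ∈ ℝᵐ, F₁, …, F_{m+1} ∈ ℝⁿ, and ε₁, …, ε_{m+1} ≥ 0, and suppose the m+1 vectors (uᵢᵀ, 1)ᵀ ∈ ℝ^{m+1} are linearly independent, so that the (m+1)×(m+1) matrix U whose i-th row is (uᵢᵀ, 1) is invertible. Then every pair (A, b) ∈ ℝ^{n×m} × ℝⁿ satisfying ‖A uᵢ + b − Fᵢ‖₂ ≤ εᵢ for all i = 1, …, m+1 obeys the quantitative bound √(‖A‖_F² + ‖b‖₂²) ≤ ‖U⁻¹‖₂ · ( √(∑_{i=1}^{m+1} εᵢ²) + √(∑_{i=1}^{m+1} ‖Fᵢ‖₂²) ), where ‖·‖_F is the Frobenius norm of a matrix and ‖U⁻¹‖₂ is the operator norm of U⁻¹ induced by the Euclidean norm. -/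

import Mathlib

/-!
Row `i` of `U` pairs with the column `(A_j, b_j)` of the unknown to give the `j`-th entry of the
fitted value `G i = A uᵢ + b`, so each such column is `U⁻¹` applied to a column of `G`, and summing
the operator-norm bound over the columns bounds the Frobenius norm of `(A, b)` by `‖U⁻¹‖` times
that of `G`. By Minkowski, the Frobenius norm of `G = (G - F) + F` is at most that of the
residuals, which is `≤ √(∑ εᵢ²)`, plus that of `F`.
-/

/-- The Euclidean norm on `Fin n → ℝ`. -/
noncomputable def e2norm {n : ℕ} (v : Fin n → ℝ) : ℝ :=
  Real.sqrt (∑ j, v j ^ 2)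

/-- Matrix–vector multiplication for an `n × m` real matrix represented as
`Fin n → Fin m → ℝ`. -/
def matVec {n m : ℕ} (A : Fin n → Fin m → ℝ) (v : Fin m → ℝ) : Fin n → ℝ :=
  fun j => ∑ k, A j k * v k

open Matrix Finset

lemma Matrix.sum_sq_mulVec_le {ι : Type*} [Fintype ι] [DecidableEq ι] (M : Matrix ι ι ℝ)
    (v : ι → ℝ) :
    ∑ i, (M *ᵥ v) i ^ 2 ≤ ‖toEuclideanCLM (𝕜 := ℝ) M‖ ^ 2 * ∑ i, v i ^ 2 := by
  have h := (toEuclideanCLM (𝕜 := ℝ) M).le_opNorm (WithLp.toLp 2 v)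
  rw [toEuclideanCLM_toLp] at h
  have := pow_le_pow_left₀ (norm_nonneg _) h 2
  simpa only [mul_pow, EuclideanSpace.real_norm_sq_eq, PiLp.toLp_apply] using this

lemma Matrix.sum_sum_sq_le_of_isUnit_det {ι κ : Type*} [Fintype ι] [DecidableEq ι] [Fintype κ]
    {M : Matrix ι ι ℝ} (hM : IsUnit M.det) (x : κ → ι → ℝ) :
    ∑ j, ∑ i, x j i ^ 2 ≤ ‖toEuclideanCLM (𝕜 := ℝ) M⁻¹‖ ^ 2 * ∑ j, ∑ i, (M *ᵥ x j) i ^ 2 := by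
  rw [mul_sum]
  refine sum_le_sum fun j _ => ?_
  simpa only [mulVec_mulVec, nonsing_inv_mul _ hM, one_mulVec] using
    sum_sq_mulVec_le M⁻¹ (M *ᵥ x j)

lemma Real.sqrt_sum_sum_add_sq_le {ι κ : Type*} [Fintype ι] [Fintype κ] (f g : ι → κ → ℝ) :
    √(∑ i, ∑ j, (f i j + g i j) ^ 2) ≤ √(∑ i, ∑ j, f i j ^ 2) + √(∑ i, ∑ j, g i j ^ 2) := by
  have norm_toLp (h : ι → κ → ℝ) :
      ‖(WithLp.toLp 2 (fun p : ι × κ => h p.1 p.2) : EuclideanSpace ℝ (ι × κ))‖ =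
        √(∑ i, ∑ j, h i j ^ 2) := by
    simp [EuclideanSpace.norm_eq, Fintype.sum_prod_type]
  rw [← norm_toLp, ← norm_toLp, ← norm_toLp]
  exact norm_add_le (WithLp.toLp 2 (fun p : ι × κ => f p.1 p.2) : EuclideanSpace ℝ (ι × κ))
    (WithLp.toLp 2 fun p : ι × κ => g p.1 p.2)

lemma Fin.sum_snoc_sq {k : ℕ} (x : Fin k → ℝ) (a : ℝ) :
    ∑ i, (Fin.snoc x a : Fin (k + 1) → ℝ) i ^ 2 = ∑ i, x i ^ 2 + a ^ 2 := by
  simp [Fin.sum_univ_castSucc]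

lemma Matrix.snoc_dotProduct_snoc {R : Type*} [CommSemiring R] {k : ℕ} (x y : Fin k → R) (a c : R) :
    (Fin.snoc x a : Fin (k + 1) → R) ⬝ᵥ Fin.snoc y c = x ⬝ᵥ y + a * c := by
  simp [dotProduct, Fin.sum_univ_castSucc]

theorem uncertainty_set_quantitative_bound_general (m n : ℕ)
    (u : Fin (m + 1) → Fin m → ℝ) (F : Fin (m + 1) → Fin n → ℝ)
    (ε : Fin (m + 1) → ℝ)
    (U : Matrix (Fin (m + 1)) (Fin (m + 1)) ℝ)
    (hU : U = Matrix.of fun i => (Fin.snoc (u i) 1 : Fin (m + 1) → ℝ))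
    (hli : LinearIndependent ℝ (fun i => (Fin.snoc (u i) 1 : Fin (m + 1) → ℝ)))
    (A : Fin n → Fin m → ℝ) (b : Fin n → ℝ)
    (hAb : ∀ i, e2norm (fun j => matVec A (u i) j + b j - F i j) ≤ ε i) :
    Real.sqrt ((∑ j, ∑ k, A j k ^ 2) + ∑ j, b j ^ 2) ≤
      ‖Matrix.toEuclideanCLM (𝕜 := ℝ) U⁻¹‖ *
        (Real.sqrt (∑ i, ε i ^ 2) + Real.sqrt (∑ i, ∑ j, F i j ^ 2)) := by
  set N := ‖toEuclideanCLM (𝕜 := ℝ) U⁻¹‖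
  set G : Fin (m + 1) → Fin n → ℝ := fun i j => matVec A (u i) j + b j
  have hdet : IsUnit U.det := U.isUnit_iff_isUnit_det.mp <| by
    rwa [← linearIndependent_rows_iff_isUnit, hU]
  have hcol (j : Fin n) : U *ᵥ Fin.snoc (A j) (b j) = fun i => G i j := by
    ext i
    simp only [hU, mulVec, of_apply, snoc_dotProduct_snoc, one_mul]
    simp only [G, matVec, dotProduct, mul_comm]
  have hcoef : (∑ j, ∑ k, A j k ^ 2) + ∑ j, b j ^ 2 ≤ N ^ 2 * ∑ i, ∑ j, G i j ^ 2 :=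
    calc (∑ j, ∑ k, A j k ^ 2) + ∑ j, b j ^ 2
        = ∑ j, ∑ i, (Fin.snoc (A j) (b j) : Fin (m + 1) → ℝ) i ^ 2 := by
          simp only [Fin.sum_snoc_sq, sum_add_distrib]
      _ ≤ N ^ 2 * ∑ j, ∑ i, (U *ᵥ Fin.snoc (A j) (b j)) i ^ 2 :=
          sum_sum_sq_le_of_isUnit_det hdet _
      _ = N ^ 2 * ∑ i, ∑ j, G i j ^ 2 := by simp only [hcol, sum_comm (γ := Fin n)]
  have hres (i : Fin (m + 1)) : ∑ j, (G i j - F i j) ^ 2 ≤ ε i ^ 2 :=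
    (Real.sqrt_le_iff.mp (hAb i)).2
  calc √((∑ j, ∑ k, A j k ^ 2) + ∑ j, b j ^ 2)
      ≤ √(N ^ 2 * ∑ i, ∑ j, G i j ^ 2) := Real.sqrt_le_sqrt hcoef
    _ = N * √(∑ i, ∑ j, G i j ^ 2) := by
        rw [Real.sqrt_mul (by positivity), Real.sqrt_sq (norm_nonneg _)]
    _ ≤ N * (√(∑ i, ∑ j, (G i j - F i j) ^ 2) + √(∑ i, ∑ j, F i j ^ 2)) := by
        gcongr
        simpa using Real.sqrt_sum_sum_add_sq_le (fun i j => G i j - F i j) F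
    _ ≤ N * (√(∑ i, ε i ^ 2) + √(∑ i, ∑ j, F i j ^ 2)) := by
        gcongr with i
        exact hres i

/-- The quantitative bound in the proof of Lemma 1 (Bounded Uncertainty Sets): if the
vectors `(uᵢᵀ, 1)ᵀ` are linearly independent (so the matrix `U` with these rows is
invertible), then any `(A, b)` with `‖A uᵢ + b − Fᵢ‖₂ ≤ εᵢ` for all `i` satisfies
`√(‖A‖_F² + ‖b‖₂²) ≤ ‖U⁻¹‖₂ (√(∑ εᵢ²) + √(∑ ‖Fᵢ‖₂²))`. -/
theorem uncertainty_set_quantitative_bound (m n : ℕ) (hm : 1 ≤ m) (hn : 1 ≤ n)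
    (u : Fin (m + 1) → Fin m → ℝ) (F : Fin (m + 1) → Fin n → ℝ)
    (ε : Fin (m + 1) → ℝ) (hε : ∀ i, 0 ≤ ε i)
    (U : Matrix (Fin (m + 1)) (Fin (m + 1)) ℝ)
    (hU : U = Matrix.of fun i => (Fin.snoc (u i) 1 : Fin (m + 1) → ℝ))
    (hli : LinearIndependent ℝ (fun i => (Fin.snoc (u i) 1 : Fin (m + 1) → ℝ)))
    (A : Fin n → Fin m → ℝ) (b : Fin n → ℝ)
    (hAb : ∀ i, e2norm (fun j => matVec A (u i) j + b j - F i j) ≤ ε i) :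
    Real.sqrt ((∑ j, ∑ k, A j k ^ 2) + ∑ j, b j ^ 2) ≤
      ‖Matrix.toEuclideanCLM (𝕜 := ℝ) U⁻¹‖ *
        (Real.sqrt (∑ i, ε i ^ 2) + Real.sqrt (∑ i, ∑ j, F i j ^ 2)) :=
  uncertainty_set_quantitative_bound_general m n u F ε U hU hli A b hAb
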